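/- arXiv:1908.04049 — 3 statements merged into one kernel-verified Lean document; each statement's English description precedes it below -/
import Mathlib

section
/- Let m be a positive integer and let a be a real number with 1 ≤ a ≤ 2m. Then there exists a constant C > 0, depending only on m and a, such that for every x ∈ ℕ₀ the following holds: if a ≠ 1 and a ≠ 2m, then ∑_{p=0}^{x} (1+x−p)^{a−2} (1+p)^{m−a/2−1} ≤ C (1+x)^{m+a/2−2}; and if a = 1 or a = 2m, then ∑_{p=0}^{x} (1+x−p)^{a−2} (1+p)^{m−a/2−1} ≤ C (1+x)^{m+a/2−2} log(2+x). -/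
/-!
Split the sum at `p = x / 2`: on each half one factor is within a factor `2` of its value at
the endpoint (the exponents are `≥ -1`), which bounds the convolution by the one-variable power
sums `∑_{p ≤ x} (1 + p) ^ γ`. These are `O((1 + x) ^ (γ + 1))` for `γ > -1`, by comparison with
the telescoping differences `(p + 1) ^ (γ + 1) - p ^ (γ + 1)`, and `O(log (2 + x))` for `γ = -1`
(harmonic numbers). With `α = a - 2`, `β = m - a / 2 - 1` one has `α + β + 1 = m + a / 2 - 2`,
and `α = -1` or `β = -1` exactly when `a = 1` or `a = 2 m`.
-/

open Finset Real

theorem rpow_le_two_mul_rpow_of_half_le {α X y : ℝ} (hα : -1 ≤ α) (hX : 0 < X)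
    (hXy : X / 2 ≤ y) (hyX : y ≤ X) : y ^ α ≤ 2 * X ^ α := by
  have hy : 0 < y := by linarith
  have hXα : 0 ≤ X ^ α := rpow_nonneg hX.le α
  rcases le_total 0 α with hα0 | hα0
  · linarith [rpow_le_rpow hy.le hyX hα0]
  · calc y ^ α ≤ (X / 2) ^ α := rpow_le_rpow_of_nonpos (by positivity) hXy hα0
      _ = X ^ α * 2 ^ (-α) := by
        rw [div_eq_mul_inv, mul_rpow hX.le (by norm_num), inv_rpow (by norm_num),
          rpow_neg (by norm_num)]
      _ ≤ X ^ α * 2 ^ (1 : ℝ) := by gcongr <;> linarith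
      _ = 2 * X ^ α := by rw [rpow_one, mul_comm]

theorem min_one_mul_rpow_sub_one_le_rpow_sub_rpow {s t : ℝ} (hs : 0 < s) (ht : 0 ≤ t) :
    min 1 s * (t + 1) ^ (s - 1) ≤ (t + 1) ^ s - t ^ s := by
  have hu : 0 < t + 1 := by linarith
  have hus : (t + 1) ^ s = (t + 1) ^ (s - 1) * (t + 1) := by
    rw [← rpow_add_one' hu.le (by linarith), sub_add_cancel]
  rcases le_total s 1 with hs1 | hs1
  · -- Bernoulli's inequality for the ratio `t / (t + 1) = 1 - 1 / (t + 1)`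
    have hbern : (1 + (t / (t + 1) - 1)) ^ s ≤ 1 + s * (t / (t + 1) - 1) :=
      rpow_one_add_le_one_add_mul_self (by linarith [div_nonneg ht hu.le]) hs.le hs1
    have hw : t / (t + 1) - 1 = -1 / (t + 1) := by field_simp; ring
    rw [add_sub_cancel, hw, div_rpow ht hu.le, div_le_iff₀ (rpow_pos_of_pos hu s)] at hbern
    rw [min_eq_right hs1]
    have : (1 + s * (-1 / (t + 1))) * (t + 1) ^ s = (t + 1) ^ s - s * (t + 1) ^ (s - 1) := by
      rw [hus]; field_simp; ring
    linarith
  · have key : t ^ (s - 1) ≤ (t + 1) ^ (s - 1) := rpow_le_rpow ht (by linarith) (by linarith)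
    have hts : t ^ s = t ^ (s - 1) * t := by
      rw [← rpow_add_one' ht (by linarith), sub_add_cancel]
    rw [min_eq_left hs1, hts, hus]
    nlinarith

noncomputable def powerSum (γ : ℝ) (x : ℕ) : ℝ :=
  ∑ p ∈ range (x + 1), (1 + (p : ℝ)) ^ γ

noncomputable def powerConv (α β : ℝ) (x : ℕ) : ℝ :=
  ∑ p ∈ range (x + 1), (1 + (x : ℝ) - p) ^ α * (1 + (p : ℝ)) ^ β

theorem powerSum_le {γ : ℝ} (hγ : -1 < γ) (x : ℕ) :
    powerSum γ x ≤ (min 1 (γ + 1))⁻¹ * (1 + x) ^ (γ + 1) := by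
  have hs : 0 < γ + 1 := by linarith
  have hmin : 0 < min 1 (γ + 1) := lt_min one_pos hs
  calc powerSum γ x
      ≤ ∑ p ∈ range (x + 1),
          (min 1 (γ + 1))⁻¹ * (((p + 1 : ℕ) : ℝ) ^ (γ + 1) - (p : ℝ) ^ (γ + 1)) := by
        refine sum_le_sum fun p _ => ?_
        rw [inv_mul_eq_div, le_div_iff₀ hmin, mul_comm]
        push_cast
        simpa [add_comm] using min_one_mul_rpow_sub_one_le_rpow_sub_rpow hs p.cast_nonneg
    _ = (min 1 (γ + 1))⁻¹ * (1 + x) ^ (γ + 1) := by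
        rw [← mul_sum, sum_range_sub (fun n : ℕ => (n : ℝ) ^ (γ + 1))]
        push_cast
        rw [zero_rpow hs.ne', sub_zero, add_comm (x : ℝ)]

theorem exists_powerSum_le {γ : ℝ} (hγ : -1 < γ) :
    ∃ C > 0, ∀ x : ℕ, powerSum γ x ≤ C * (1 + x) ^ (γ + 1) :=
  ⟨_, inv_pos.2 (lt_min one_pos (by linarith)), powerSum_le hγ⟩

theorem powerSum_neg_one_le (x : ℕ) : powerSum (-1) x ≤ 1 + log (1 + x) := by
  have h := harmonic_le_one_add_log (x + 1)
  simp only [harmonic, Rat.cast_sum, Rat.cast_inv, Rat.cast_natCast] at h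
  push_cast at h
  simpa [powerSum, rpow_neg_one, add_comm] using h

theorem exists_powerSum_le_mul_log {γ : ℝ} (hγ : -1 ≤ γ) :
    ∃ C > 0, ∀ x : ℕ, powerSum γ x ≤ C * (1 + x) ^ (γ + 1) * log (2 + x) := by
  have hlog2 : 1 / 2 < log 2 := by linarith [log_two_gt_d9]
  have hlog (x : ℕ) : log 2 ≤ log (2 + x) :=
    log_le_log two_pos (by linarith [x.cast_nonneg (α := ℝ)])
  rcases hγ.eq_or_lt with rfl | hγ
  · refine ⟨3, three_pos, fun x => ?_⟩
    have : log (1 + (x : ℝ)) ≤ log (2 + x) := log_le_log (by positivity) (by linarith)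
    rw [neg_add_cancel, rpow_zero]
    linarith [powerSum_neg_one_le x, hlog x]
  · obtain ⟨C, hC, hS⟩ := exists_powerSum_le hγ
    refine ⟨C / log 2, div_pos hC (by linarith), fun x => ?_⟩
    have hX : 0 ≤ C * (1 + (x : ℝ)) ^ (γ + 1) := by positivity
    calc powerSum γ x ≤ C * (1 + x) ^ (γ + 1) := hS x
      _ ≤ C * (1 + x) ^ (γ + 1) * (log (2 + x) / log 2) :=
        le_mul_of_one_le_right hX ((one_le_div (by linarith)).2 (hlog x))
      _ = C / log 2 * (1 + x) ^ (γ + 1) * log (2 + x) := by ring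

theorem rpow_mul_rpow_le_of_le_add {α β X y z : ℝ} (hα : -1 ≤ α) (hβ : -1 ≤ β)
    (hy : 0 < y) (hz : 0 < z) (hyX : y ≤ X) (hzX : z ≤ X) (hXyz : X ≤ y + z) :
    y ^ α * z ^ β ≤ 2 * X ^ α * z ^ β + 2 * X ^ β * y ^ α := by
  have hX : 0 < X := hy.trans_le hyX
  have hyα := rpow_nonneg hy.le α
  have hzβ := rpow_nonneg hz.le β
  have hXα := rpow_nonneg hX.le α
  have hXβ := rpow_nonneg hX.le β
  rcases le_total (X / 2) y with hXy | hyX'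
  · have := mul_le_mul_of_nonneg_right (rpow_le_two_mul_rpow_of_half_le hα hX hXy hyX) hzβ
    nlinarith
  · have := mul_le_mul_of_nonneg_left
      (rpow_le_two_mul_rpow_of_half_le hβ hX (by linarith) hzX) hyα
    nlinarith

theorem powerConv_le {α β : ℝ} (hα : -1 ≤ α) (hβ : -1 ≤ β) (x : ℕ) :
    powerConv α β x ≤ 2 * (1 + x) ^ α * powerSum β x + 2 * (1 + x) ^ β * powerSum α x := by
  have hreflect : ∑ p ∈ range (x + 1), (1 + (x : ℝ) - p) ^ α = powerSum α x := by
    rw [powerSum, ← sum_range_reflect]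
    refine sum_congr rfl fun p hp => ?_
    rw [add_tsub_cancel_right, Nat.cast_sub (Nat.lt_succ_iff.mp (mem_range.mp hp))]
    ring_nf
  rw [powerSum, ← hreflect, mul_sum, mul_sum, ← sum_add_distrib]
  refine sum_le_sum fun p hp => ?_
  have hpx : (p : ℝ) ≤ x := by exact_mod_cast Nat.lt_succ_iff.mp (mem_range.mp hp)
  exact rpow_mul_rpow_le_of_le_add hα hβ (by linarith) (by positivity) (by linarith)
    (by linarith) (by linarith)

theorem powerConv_le_of_powerSum_le {α β Cα Cβ ℓ : ℝ} {x : ℕ} (hα : -1 ≤ α) (hβ : -1 ≤ β)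
    (hSα : powerSum α x ≤ Cα * (1 + x) ^ (α + 1) * ℓ)
    (hSβ : powerSum β x ≤ Cβ * (1 + x) ^ (β + 1) * ℓ) :
    powerConv α β x ≤ 2 * (Cα + Cβ) * (1 + x) ^ (α + β + 1) * ℓ := by
  have hx : (0 : ℝ) < 1 + x := by positivity
  have hαβ : (1 + (x : ℝ)) ^ α * (1 + x) ^ (β + 1) = (1 + x) ^ (α + β + 1) := by
    rw [← rpow_add hx]; ring_nf
  have hβα : (1 + (x : ℝ)) ^ β * (1 + x) ^ (α + 1) = (1 + x) ^ (α + β + 1) := by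
    rw [← rpow_add hx]; ring_nf
  calc powerConv α β x
      ≤ 2 * (1 + x) ^ α * powerSum β x + 2 * (1 + x) ^ β * powerSum α x := powerConv_le hα hβ x
    _ ≤ 2 * (1 + x) ^ α * (Cβ * (1 + x) ^ (β + 1) * ℓ)
        + 2 * (1 + x) ^ β * (Cα * (1 + x) ^ (α + 1) * ℓ) := by gcongr
    _ = 2 * (Cα + Cβ) * (1 + x) ^ (α + β + 1) * ℓ := by
        linear_combination (2 * Cβ * ℓ) * hαβ + (2 * Cα * ℓ) * hβα

theorem stmt0_general (m : ℕ) (a : ℝ) (ha1 : 1 ≤ a) (ha2 : a ≤ 2 * m) :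
    ∃ C : ℝ, 0 < C ∧ ∀ x : ℕ,
      ((a ≠ 1 ∧ a ≠ 2 * m) →
        (∑ p ∈ Finset.range (x + 1),
            (1 + (x : ℝ) - (p : ℝ)) ^ (a - 2) * (1 + (p : ℝ)) ^ ((m : ℝ) - a / 2 - 1))
          ≤ C * (1 + (x : ℝ)) ^ ((m : ℝ) + a / 2 - 2)) ∧
      ((a = 1 ∨ a = 2 * m) →
        (∑ p ∈ Finset.range (x + 1),
            (1 + (x : ℝ) - (p : ℝ)) ^ (a - 2) * (1 + (p : ℝ)) ^ ((m : ℝ) - a / 2 - 1))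
          ≤ C * (1 + (x : ℝ)) ^ ((m : ℝ) + a / 2 - 2) * Real.log (2 + (x : ℝ))) := by
  have hα : -1 ≤ a - 2 := by linarith
  have hβ : -1 ≤ (m : ℝ) - a / 2 - 1 := by linarith
  have hexp : a - 2 + ((m : ℝ) - a / 2 - 1) + 1 = m + a / 2 - 2 := by ring
  by_cases hgen : a ≠ 1 ∧ a ≠ 2 * m
  · have hα' : -1 < a - 2 := hα.lt_of_ne fun h => hgen.1 (by linarith)
    have hβ' : -1 < (m : ℝ) - a / 2 - 1 := hβ.lt_of_ne fun h => hgen.2 (by linarith)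
    obtain ⟨Cα, hCα, hSα⟩ := exists_powerSum_le hα'
    obtain ⟨Cβ, hCβ, hSβ⟩ := exists_powerSum_le hβ'
    refine ⟨2 * (Cα + Cβ), by positivity, fun x => ⟨fun _ => ?_, fun h => by tauto⟩⟩
    have := powerConv_le_of_powerSum_le hα hβ
      ((hSα x).trans_eq (mul_one _).symm) ((hSβ x).trans_eq (mul_one _).symm)
    rw [hexp, mul_one] at this
    exact this
  · obtain ⟨Cα, hCα, hSα⟩ := exists_powerSum_le_mul_log hα
    obtain ⟨Cβ, hCβ, hSβ⟩ := exists_powerSum_le_mul_log hβ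
    refine ⟨2 * (Cα + Cβ), by positivity, fun x => ⟨fun h => absurd h hgen, fun _ => ?_⟩⟩
    have := powerConv_le_of_powerSum_le hα hβ (hSα x) (hSβ x)
    rw [hexp] at this
    exact this

theorem stmt0 (m : ℕ) (hm : 0 < m) (a : ℝ) (ha1 : 1 ≤ a) (ha2 : a ≤ 2 * m) :
    ∃ C : ℝ, 0 < C ∧ ∀ x : ℕ,
      ((a ≠ 1 ∧ a ≠ 2 * m) →
        (∑ p ∈ Finset.range (x + 1),
            (1 + (x : ℝ) - (p : ℝ)) ^ (a - 2) * (1 + (p : ℝ)) ^ ((m : ℝ) - a / 2 - 1))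
          ≤ C * (1 + (x : ℝ)) ^ ((m : ℝ) + a / 2 - 2)) ∧
      ((a = 1 ∨ a = 2 * m) →
        (∑ p ∈ Finset.range (x + 1),
            (1 + (x : ℝ) - (p : ℝ)) ^ (a - 2) * (1 + (p : ℝ)) ^ ((m : ℝ) - a / 2 - 1))
          ≤ C * (1 + (x : ℝ)) ^ ((m : ℝ) + a / 2 - 2) * Real.log (2 + (x : ℝ))) :=
  stmt0_general m a ha1 ha2
end

section
/- Let k, l ∈ ℕ₀, let m be a positive integer, and let a ∈ ℂ with 0 < Re(a) < m. Then ∫₀^∞ L_k^{m−1}(t) L_l^{m−1}(t) e^{−t} t^{m−1−a} dt = Γ(a)^{−2} ∑_{p=0}^{min{k,l}} [Γ(a+k−p)/(k−p)!] · [Γ(a+l−p)/(l−p)!] · [Γ(p+m−a)/p!], where t^{m−1−a} := exp((m−1−a) log t) for t > 0 and Γ is the complex Gamma function. -/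
open MeasureTheory

/-- Generalized binomial coefficient `C(t, j) = t(t-1)⋯(t-j+1)/j!`. -/
noncomputable def genChoose (t : ℝ) (j : ℕ) : ℝ :=
  (∏ i ∈ Finset.range j, (t - (i : ℝ))) / (Nat.factorial j : ℝ)

/-- Laguerre polynomial `L_k^γ(x) = ∑_{j=0}^k (-1)^j C(k+γ, k-j) x^j / j!`. -/
noncomputable def laguerre (γ : ℝ) (k : ℕ) (x : ℝ) : ℝ :=
  ∑ j ∈ Finset.range (k + 1),
    (-1 : ℝ) ^ j * genChoose ((k : ℝ) + γ) (k - j) * x ^ j / (Nat.factorial j : ℝ)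

/-!
Write `c = m - 1`, `s = m - a` and `x = a - m = -s`. Expanding both Laguerre polynomials and
integrating termwise against `e^{-t} t^{s-1}` gives `Γ(s + i + j)`, and
`Γ(z + n) = n! ⋅ multichoose z n ⋅ Γ(z)` turns the left side into
`Γ(s) ∑_{i,j} C(x,i) C(x-i,j) C(c+k,k-i) C(c+l,l-j)` and the right side into
`Γ(s) ∑_p (-1)^p C(x,p) C(x+c+k-p,k-p) C(x+c+l-p,l-p)`.

The two binomial sums agree in every binomial ring. Summing out `j` by Vandermonde leaves
`∑_i C(x,i) C(c+k,k-i) C(y-i,l)` with `y = x + c + l`. Upper negation turns Vandermonde into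
`C(y-i,l) = ∑_p (-1)^p C(i,p) C(y-p,l-p)`; after exchanging the sums,
`C(i,p) C(x,i) = C(x,p) C(x-p,i-p)` and Vandermonde once more collapse the sum over `i`.
-/

open Finset
open scoped Nat

theorem neg_one_pow_mul_neg_one_pow {M : Type*} [Monoid M] [HasDistribNeg M] (n : ℕ) :
    (-1 : M) ^ n * (-1) ^ n = 1 := by
  rw [← pow_add, ← two_mul, pow_mul, neg_one_sq, one_pow]

namespace Ring

variable {R : Type*} [CommRing R] [BinomialRing R]

theorem choose_add_eq_sum_range (r s : R) (n : ℕ) :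
    choose (r + s) n = ∑ i ∈ range (n + 1), choose r i * choose s (n - i) := by
  rw [add_choose_eq n (Commute.all r s), Nat.sum_antidiagonal_eq_sum_range_succ_mk]

theorem choose_neg_eq (r : R) (n : ℕ) : choose (-r) n = (-1) ^ n * choose (r + n - 1) n := by
  rw [choose_neg, Units.smul_def, Int.coe_negOnePow_natCast, zsmul_eq_mul]
  push_cast
  rfl

theorem neg_one_pow_mul_choose_sub_natCast (y : R) {p l : ℕ} (hp : p ≤ l) :
    (-1) ^ p * choose (y - p) (l - p) = (-1) ^ l * choose (l - y - 1) (l - p) := by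
  rw [show (l : R) - y - 1 = -(y - l + 1) by ring, choose_neg_eq, Nat.cast_sub hp,
    show y - l + 1 + (l - p : R) - 1 = y - p by ring, ← Nat.sub_add_cancel hp, pow_add,
    Nat.add_sub_cancel]
  linear_combination
    -(-1) ^ p * choose (y - p) (l - p) * neg_one_pow_mul_neg_one_pow (M := R) (l - p)

theorem sum_neg_one_pow_mul_choose_mul_choose_sub (y : R) (i l : ℕ) :
    ∑ p ∈ range (l + 1), (-1) ^ p * (i.choose p : R) * choose (y - p) (l - p)
      = choose (y - i) l := by
  have hneg : choose (i + (l - y - 1)) l = (-1) ^ l * choose (y - i) l := by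
    rw [show (i : R) + (l - y - 1) = -(y - i - l + 1) by ring, choose_neg_eq,
      show y - i - l + 1 + l - 1 = y - i by ring]
  calc ∑ p ∈ range (l + 1), (-1) ^ p * (i.choose p : R) * choose (y - p) (l - p)
      = (-1) ^ l * ∑ p ∈ range (l + 1), choose (i : R) p * choose (l - y - 1) (l - p) := by
        rw [mul_sum]
        refine sum_congr rfl fun p hp => ?_
        rw [choose_natCast, mul_right_comm,
          neg_one_pow_mul_choose_sub_natCast y (Nat.lt_succ_iff.mp (mem_range.mp hp))]
        ring
    _ = choose (y - i) l := by
        rw [← choose_add_eq_sum_range, hneg, ← mul_assoc, neg_one_pow_mul_neg_one_pow, one_mul]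

theorem sum_choose_mul_choose_mul_choose (x : R) (N k p : ℕ) (hp : p ≤ k) :
    ∑ i ∈ range (k + 1), (i.choose p : R) * choose x i * (N.choose (k - i) : R)
      = choose x p * choose (x - p + N) (k - p) := by
  rw [choose_add_eq_sum_range, mul_sum, show k + 1 = p + (k - p + 1) by omega, sum_range_add,
    sum_eq_zero fun i hi => by rw [Nat.choose_eq_zero_of_lt (mem_range.mp hi)]; simp, zero_add]
  refine sum_congr rfl fun q _ => ?_
  have h := choose_smul_choose x (Nat.le_add_right p q)
  rw [nsmul_eq_mul, Nat.add_sub_cancel_left] at h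
  rw [choose_natCast, show k - (p + q) = k - p - q by omega]
  linear_combination (N.choose (k - p - q) : R) * h

theorem sum_sum_choose_mul_choose_mul_choose_mul_choose (x : R) (c k l : ℕ) :
    ∑ i ∈ range (k + 1), ∑ j ∈ range (l + 1),
        choose x i * choose (x - i) j * ((c + k).choose (k - i) : R) * ((c + l).choose (l - j) : R)
      = ∑ p ∈ range (min k l + 1), (-1) ^ p * choose x p
          * choose (x + (c + k : ℕ) - p) (k - p) * choose (x + (c + l : ℕ) - p) (l - p) := by
  set y : R := x + (c + l : ℕ)
  calc _ = ∑ i ∈ range (k + 1),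
          choose x i * ((c + k).choose (k - i) : R) * choose (y - i) l := by
        refine sum_congr rfl fun i _ => ?_
        rw [show y - i = x - i + (c + l : ℕ) by ring, choose_add_eq_sum_range, mul_sum]
        refine sum_congr rfl fun j _ => ?_
        rw [choose_natCast]
        ring
    _ = ∑ p ∈ range (l + 1), (-1) ^ p * choose (y - p) (l - p) *
          ∑ i ∈ range (k + 1),
            (i.choose p : R) * choose x i * ((c + k).choose (k - i) : R) := by
        simp_rw [← sum_neg_one_pow_mul_choose_mul_choose_sub y _ l, mul_sum]
        rw [sum_comm]
        refine sum_congr rfl fun p _ => sum_congr rfl fun i _ => ?_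
        ring
    _ = _ := by
        rw [← sum_subset (range_subset_range.mpr (Nat.succ_le_succ (min_le_right k l)))]
        · refine sum_congr rfl fun p hp => ?_
          have hpk : p ≤ k := by have := mem_range.mp hp; omega
          rw [sum_choose_mul_choose_mul_choose x _ k p hpk,
            show x - p + (c + k : ℕ) = x + (c + k : ℕ) - p by ring]
          ring
        · intro p hp hp'
          have hkp : k < p := by simp only [mem_range, not_lt] at hp hp'; omega
          rw [sum_eq_zero fun i hi => by
            rw [Nat.choose_eq_zero_of_lt (by have := mem_range.mp hi; omega)]; simp, mul_zero]

end Ring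

theorem genChoose_eq_choose (t : ℝ) (j : ℕ) : genChoose t j = Ring.choose t j := by
  rw [genChoose, Ring.choose_eq_smul, ← Polynomial.aeval_eq_smeval, Polynomial.aeval_def,
    ← Polynomial.eval_map, descPochhammer_map, descPochhammer_eval_eq_prod_range, smul_eq_mul,
    inv_mul_eq_div]

theorem ofReal_laguerre_natCast (c n : ℕ) (t : ℝ) :
    (laguerre c n t : ℂ)
      = ∑ i ∈ range (n + 1),
          (-1) ^ i * ((c + n).choose (n - i) : ℂ) / i ! * (t : ℂ) ^ i := by
  rw [laguerre, Complex.ofReal_sum]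
  refine sum_congr rfl fun i _ => ?_
  rw [genChoose_eq_choose, ← Nat.cast_add, add_comm n, Ring.choose_natCast]
  push_cast
  ring

namespace Complex

theorem ne_neg_natCast_of_re_pos {z : ℂ} (hz : 0 < z.re) (k : ℕ) : z ≠ -k := by
  rintro rfl
  simp only [neg_re, natCast_re, Left.neg_pos_iff] at hz
  exact (k.cast_nonneg).not_gt hz

theorem Gamma_add_nat_eq_multichoose {z : ℂ} (hz : ∀ k : ℕ, z ≠ -k) (n : ℕ) :
    Gamma (z + n) = n ! * Ring.multichoose z n * Gamma z := by
  rw [← div_mul_cancel₀ (Gamma (z + n)) (Gamma_ne_zero hz), Gamma_add_nat_div_Gamma_eq z hz,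
    ← Polynomial.ascPochhammer_smeval_eq_eval,
    ← Ring.factorial_nsmul_multichoose_eq_ascPochhammer, nsmul_eq_mul]

theorem Gamma_add_nat_eq_choose {z : ℂ} (hz : ∀ k : ℕ, z ≠ -k) (n : ℕ) :
    Gamma (z + n) = n ! * Ring.choose (z + n - 1) n * Gamma z := by
  rw [Gamma_add_nat_eq_multichoose hz, Ring.multichoose_eq]

theorem Gamma_add_nat_eq_choose_neg {z : ℂ} (hz : ∀ k : ℕ, z ≠ -k) (n : ℕ) :
    Gamma (z + n) = (-1) ^ n * n ! * Ring.choose (-z) n * Gamma z := by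
  rw [Gamma_add_nat_eq_multichoose hz, Ring.choose_neg_eq, Ring.multichoose_eq]
  linear_combination
    -(n ! * Ring.choose (z + n - 1) n * Gamma z) * neg_one_pow_mul_neg_one_pow (M := ℂ) n

theorem Gamma_add_nat_add_nat_eq {z : ℂ} (hz : ∀ k : ℕ, z ≠ -k) (i j : ℕ) :
    Gamma (z + ↑(i + j)) = (-1) ^ (i + j) * i ! * j ! * Ring.choose (-z) i
      * Ring.choose (-z - i) j * Gamma z := by
  have hzi : ∀ k : ℕ, z + i ≠ -k := fun k h => hz (k + i) (by push_cast; linear_combination h)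
  rw [Nat.cast_add, ← add_assoc, Gamma_add_nat_eq_choose_neg hzi, Gamma_add_nat_eq_choose_neg hz,
    neg_add, ← sub_eq_add_neg, pow_add]
  ring

theorem Gamma_add_natCast_sub_natCast_eq {z : ℂ} (hz : ∀ k : ℕ, z ≠ -k) {n p : ℕ}
    (hp : p ≤ n) :
    Gamma (z + n - p) = (n - p) ! * Ring.choose (z + n - p - 1) (n - p) * Gamma z := by
  rw [add_sub_assoc, ← Nat.cast_sub hp, Gamma_add_nat_eq_choose hz]

theorem eqOn_pow_mul_exp_neg_mul_cpow (s : ℂ) (n : ℕ) :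
    Set.EqOn (fun t : ℝ ↦ (t : ℂ) ^ n * exp (-t) * (t : ℂ) ^ (s - 1))
      (fun t : ℝ ↦ ((Real.exp (-t) : ℝ) : ℂ) * (t : ℂ) ^ (s + n - 1)) (Set.Ioi 0) := by
  intro t ht
  have ht0 : (t : ℂ) ≠ 0 := ofReal_ne_zero.mpr (ne_of_gt ht)
  simp only [ofReal_exp, ofReal_neg]
  rw [show s + n - 1 = n + (s - 1) by ring, cpow_add _ _ ht0, cpow_natCast]
  ring

theorem re_add_natCast_pos {s : ℂ} (hs : 0 < s.re) (n : ℕ) : 0 < (s + n).re := by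
  simp only [add_re, natCast_re]
  positivity

theorem integrableOn_pow_mul_exp_neg_mul_cpow {s : ℂ} (hs : 0 < s.re) (n : ℕ) :
    IntegrableOn (fun t : ℝ ↦ (t : ℂ) ^ n * exp (-t) * (t : ℂ) ^ (s - 1)) (Set.Ioi 0) :=
  (integrableOn_congr_fun (eqOn_pow_mul_exp_neg_mul_cpow s n) measurableSet_Ioi).mpr
    (GammaIntegral_convergent (re_add_natCast_pos hs n))

theorem integral_pow_mul_exp_neg_mul_cpow {s : ℂ} (hs : 0 < s.re) (n : ℕ) :
    ∫ t in Set.Ioi (0 : ℝ), (t : ℂ) ^ n * exp (-t) * (t : ℂ) ^ (s - 1) = Gamma (s + n) := by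
  rw [setIntegral_congr_fun measurableSet_Ioi (eqOn_pow_mul_exp_neg_mul_cpow s n),
    Gamma_eq_integral (re_add_natCast_pos hs n), GammaIntegral]

end Complex

theorem integral_sum_mul_sum_mul_exp_neg_mul_cpow {s : ℂ} (hs : 0 < s.re) (α β : ℕ → ℂ)
    (K L : ℕ) :
    ∫ t in Set.Ioi (0 : ℝ), (∑ i ∈ range K, α i * (t : ℂ) ^ i)
        * (∑ j ∈ range L, β j * (t : ℂ) ^ j) * Complex.exp (-t) * (t : ℂ) ^ (s - 1)
      = ∑ i ∈ range K, ∑ j ∈ range L, α i * β j * Complex.Gamma (s + ↑(i + j)) := by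
  have hexpand (t : ℝ) : (∑ i ∈ range K, α i * (t : ℂ) ^ i)
        * (∑ j ∈ range L, β j * (t : ℂ) ^ j) * Complex.exp (-t) * (t : ℂ) ^ (s - 1)
      = ∑ i ∈ range K, ∑ j ∈ range L,
          α i * β j * ((t : ℂ) ^ (i + j) * Complex.exp (-t) * (t : ℂ) ^ (s - 1)) := by
    rw [sum_mul_sum]
    simp only [sum_mul]
    refine sum_congr rfl fun i _ => sum_congr rfl fun j _ => ?_
    ring
  have hint (n : ℕ) := (Complex.integrableOn_pow_mul_exp_neg_mul_cpow hs n).const_mul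
  simp_rw [hexpand]
  rw [integral_finsetSum _ fun i _ => integrable_finsetSum _ fun j _ => hint _ _]
  refine sum_congr rfl fun i _ => ?_
  rw [integral_finsetSum _ fun j _ => hint _ _]
  refine sum_congr rfl fun j _ => ?_
  rw [integral_const_mul, Complex.integral_pow_mul_exp_neg_mul_cpow hs]

theorem integral_laguerre_mul_laguerre_mul_exp_neg_mul_cpow (c k l : ℕ) {s : ℂ}
    (hs : 0 < s.re) :
    ∫ t in Set.Ioi (0 : ℝ), (laguerre c k t : ℂ) * (laguerre c l t : ℂ)
        * Complex.exp (-t) * (t : ℂ) ^ (s - 1)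
      = Complex.Gamma s * ∑ i ∈ range (k + 1), ∑ j ∈ range (l + 1),
          Ring.choose (-s) i * Ring.choose (-s - i) j * ((c + k).choose (k - i) : ℂ)
            * ((c + l).choose (l - j) : ℂ) := by
  have hfact (n : ℕ) : (n ! : ℂ) ≠ 0 := Nat.cast_ne_zero.mpr n.factorial_ne_zero
  simp only [ofReal_laguerre_natCast]
  rw [integral_sum_mul_sum_mul_exp_neg_mul_cpow hs, mul_sum]
  refine sum_congr rfl fun i _ => ?_
  rw [mul_sum]
  refine sum_congr rfl fun j _ => ?_
  rw [Complex.Gamma_add_nat_add_nat_eq (Complex.ne_neg_natCast_of_re_pos hs), pow_add]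
  field_simp [hfact]
  rw [sq, neg_one_pow_mul_neg_one_pow, sq, neg_one_pow_mul_neg_one_pow]
  ring

theorem stmt2 (k l m : ℕ) (hm : 0 < m) (a : ℂ) (h1 : 0 < a.re) (h2 : a.re < m) :
    (∫ t in Set.Ioi (0 : ℝ),
        (laguerre ((m : ℝ) - 1) k t : ℂ) * (laguerre ((m : ℝ) - 1) l t : ℂ) *
          Complex.exp (-(t : ℂ)) * (t : ℂ) ^ ((m : ℂ) - 1 - a))
      = ((Complex.Gamma a) ^ 2)⁻¹ *
          ∑ p ∈ Finset.range (min k l + 1),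
            (Complex.Gamma (a + (k : ℂ) - (p : ℂ)) / (Nat.factorial (k - p) : ℂ)) *
            (Complex.Gamma (a + (l : ℂ) - (p : ℂ)) / (Nat.factorial (l - p) : ℂ)) *
            (Complex.Gamma ((p : ℂ) + (m : ℂ) - a) / (Nat.factorial p : ℂ)) := by
  obtain ⟨c, rfl⟩ : ∃ c, m = c + 1 := ⟨m - 1, (Nat.sub_add_cancel hm).symm⟩
  have hs : 0 < ((c + 1 : ℕ) - a : ℂ).re := by simpa using h2
  have ha : ∀ n : ℕ, a ≠ -n := Complex.ne_neg_natCast_of_re_pos h1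
  have hGa : Complex.Gamma a ≠ 0 := Complex.Gamma_ne_zero ha
  have hfact (n : ℕ) : (n ! : ℂ) ≠ 0 := Nat.cast_ne_zero.mpr n.factorial_ne_zero
  rw [show ((c + 1 : ℕ) : ℝ) - 1 = c by push_cast; ring,
    show ((c + 1 : ℕ) : ℂ) - 1 - a = (↑(c + 1) - a) - 1 by ring,
    integral_laguerre_mul_laguerre_mul_exp_neg_mul_cpow c k l hs,
    Ring.sum_sum_choose_mul_choose_mul_choose_mul_choose, mul_sum, mul_sum]
  refine sum_congr rfl fun p hp => ?_
  have hpk : p ≤ k := by have := mem_range.mp hp; omega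
  have hpl : p ≤ l := by have := mem_range.mp hp; omega
  rw [Complex.Gamma_add_natCast_sub_natCast_eq ha hpk,
    Complex.Gamma_add_natCast_sub_natCast_eq ha hpl,
    show (p : ℂ) + ↑(c + 1) - a = (↑(c + 1) - a) + p by ring,
    Complex.Gamma_add_nat_eq_choose_neg (Complex.ne_neg_natCast_of_re_pos hs),
    show a + k - p - 1 = -(↑(c + 1) - a) + ↑(c + k) - p by push_cast; ring,
    show a + l - p - 1 = -(↑(c + 1) - a) + ↑(c + l) - p by push_cast; ring]
  field_simp [hfact]
end

section
/- Let β ∈ ℕ₀, ε ∈ (0,2) and c > 0. Then there exists a constant C > 0, depending only on β, c and ε, such that for all α, n ∈ ℕ₀ with 1 ≤ α ≤ c(1+n) and all x ∈ [−1+ε, 1] satisfying 1 − x ≤ (1/16)(1 − x_tr), where u := n + (α+β+1)/2 and x_tr := 1 − α²/(2u²), one has | ((1−x)/2)^{α/2} P_n^{(α,β)}(x) | ≤ C 2^{−α}. -/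
/-- Jacobi polynomial
`P_n^{(α,β)}(x) = ∑_{s=0}^n C(n+α, n-s) C(n+β, s) ((x-1)/2)^s ((x+1)/2)^{n-s}`. -/
noncomputable def jacobi (α β : ℝ) (n : ℕ) (x : ℝ) : ℝ :=
  ∑ s ∈ Finset.range (n + 1),
    genChoose ((n : ℝ) + α) (n - s) * genChoose ((n : ℝ) + β) s *
      ((x - 1) / 2) ^ s * ((x + 1) / 2) ^ (n - s)

/-!
For natural parameters every term of the Jacobi sum is a product of nonnegative binomial
coefficients and powers of `t = (1 - x) / 2` and `(1 + x) / 2 ≤ 1`. Comparing the `s`-th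
coefficient with the `s = 0` one gives
`|P_n^{(α,β)}(x)| ≤ C(n+α, n) exp (t n (n+β) / (α+1))`, and the hypothesis
`1 - x ≤ (1 - x_tr) / 16` makes the exponent at most `α / 64` and the weight `t^{α/2}` at most
`(α / (8u))^α`. One is left with `C(n+α, α) α^α e^{α/64} ≤ (4n + 2α)^α`: for `3α ≤ 4n` use
`C(n+α, α) ≤ (n+α)^α / α!` and `α^α ≤ e^α α!`; otherwise use the entropy bound
`C(n+α, α) n^n α^α ≤ (n+α)^(n+α)` and estimate `n log (1 + α/n)` by the tangent line of `log`
at `2`. So the constant `C = 1` works.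
-/

open Real Finset
open scoped Nat

lemma genChoose_natCast (m j : ℕ) : genChoose m j = m.choose j := by
  rw [genChoose, ← descPochhammer_eval_eq_prod_range, descPochhammer_eval_eq_descFactorial,
    Nat.descFactorial_eq_factorial_mul_choose, Nat.cast_mul, mul_div_cancel_left₀]
  exact_mod_cast j.factorial_ne_zero

namespace Nat

theorem choose_add_mul_pow_le (m k s : ℕ) :
    m.choose (k + s) * (k + 1) ^ s ≤ m.choose k * (m - k) ^ s := by
  induction s with
  | zero => simp
  | succ s ih =>
    calc m.choose (k + (s + 1)) * (k + 1) ^ (s + 1)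
        = m.choose (k + s + 1) * (k + 1) * (k + 1) ^ s := by ring_nf
      _ ≤ m.choose (k + s + 1) * (k + s + 1) * (k + 1) ^ s := by gcongr; omega
      _ = m.choose (k + s) * (k + 1) ^ s * (m - (k + s)) := by
          rw [choose_succ_right_eq]; ring
      _ ≤ m.choose k * (m - k) ^ s * (m - k) := by gcongr; omega
      _ = m.choose k * (m - k) ^ (s + 1) := by ring

theorem choose_sub_mul_choose_mul_le (n a b s : ℕ) (hs : s ≤ n) :
    (n + a).choose (n - s) * (n + b).choose s * ((a + 1) ^ s * s !) ≤
      (n + a).choose n * (n * (n + b)) ^ s := by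
  have h₁ : (n + a).choose (n - s) * (a + 1) ^ s ≤ (n + a).choose n * n ^ s := by
    rw [choose_symm_of_eq_add (by omega : n + a = n - s + (a + s)), choose_symm_add]
    simpa using choose_add_mul_pow_le (n + a) a s
  have h₂ : (n + b).choose s * s ! ≤ (n + b) ^ s := by
    rw [mul_comm, ← descFactorial_eq_factorial_mul_choose]
    exact descFactorial_le_pow _ _
  calc (n + a).choose (n - s) * (n + b).choose s * ((a + 1) ^ s * s !)
      = ((n + a).choose (n - s) * (a + 1) ^ s) * ((n + b).choose s * s !) := by ring
    _ ≤ ((n + a).choose n * n ^ s) * (n + b) ^ s := Nat.mul_le_mul h₁ h₂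
    _ = (n + a).choose n * (n * (n + b)) ^ s := by rw [mul_pow]; ring

theorem choose_mul_pow_mul_pow_le_add_pow (n a : ℕ) :
    (n + a).choose a * n ^ n * a ^ a ≤ (n + a) ^ (n + a) := by
  rw [add_comm n a, add_pow]
  calc (a + n).choose a * n ^ n * a ^ a = a ^ a * n ^ (a + n - a) * (a + n).choose a := by
        rw [Nat.add_sub_cancel_left]; ring
    _ ≤ _ := single_le_sum (f := fun k => a ^ k * n ^ (a + n - k) * (a + n).choose k)
        (fun _ _ => zero_le _) (mem_range.mpr (by omega))

end Nat

lemma choose_sub_mul_choose_mul_pow_le (n a b s : ℕ) (hs : s ≤ n) {t : ℝ} (ht : 0 ≤ t) :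
    ((n + a).choose (n - s) : ℝ) * (n + b).choose s * t ^ s ≤
      (n + a).choose n * ((t * (n * (n + b) / (a + 1))) ^ s / s !) := by
  have key : ((n + a).choose (n - s) : ℝ) * (n + b).choose s * ((a + 1) ^ s * s !) ≤
      (n + a).choose n * (n * (n + b)) ^ s := mod_cast Nat.choose_sub_mul_choose_mul_le n a b s hs
  calc ((n + a).choose (n - s) : ℝ) * (n + b).choose s * t ^ s
      = (n + a).choose (n - s) * (n + b).choose s * ((a + 1) ^ s * s !) *
          (t ^ s / ((a + 1) ^ s * s !)) := by field_simp
    _ ≤ (n + a).choose n * (n * (n + b)) ^ s * (t ^ s / ((a + 1) ^ s * s !)) := by gcongr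
    _ = (n + a).choose n * ((t * (n * (n + b) / (a + 1))) ^ s / s !) := by
        simp only [mul_pow, div_pow]; field_simp

lemma abs_jacobi_natCast_le (a b n : ℕ) {x : ℝ} (hx : x ∈ Set.Icc (-1 : ℝ) 1) :
    |jacobi a b n x| ≤ (n + a).choose n * exp ((1 - x) / 2 * (n * (n + b) / (a + 1))) := by
  obtain ⟨hx₁, hx₂⟩ := hx
  set y := (1 - x) / 2 * (n * (n + b) / (a + 1))
  have hterm : ∀ s ∈ range (n + 1),
      |genChoose (n + a) (n - s) * genChoose (n + b) s * ((x - 1) / 2) ^ s *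
        ((x + 1) / 2) ^ (n - s)| ≤ (n + a).choose n * (y ^ s / s !) := by
    intro s hs
    have hsn : s ≤ n := Nat.lt_succ_iff.mp (mem_range.mp hs)
    have ht : 0 ≤ (1 - x) / 2 := by linarith
    have hx' : 0 ≤ (x + 1) / 2 := by linarith
    rw [← Nat.cast_add, ← Nat.cast_add, genChoose_natCast, genChoose_natCast]
    calc |((n + a).choose (n - s) : ℝ) * (n + b).choose s * ((x - 1) / 2) ^ s *
          ((x + 1) / 2) ^ (n - s)|
        = (n + a).choose (n - s) * (n + b).choose s * ((1 - x) / 2) ^ s *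
            ((x + 1) / 2) ^ (n - s) := by
          rw [abs_mul, abs_mul, abs_mul, abs_pow, abs_pow, Nat.abs_cast, Nat.abs_cast,
            abs_of_nonneg hx', abs_of_nonpos (by linarith), ← neg_div, neg_sub]
      _ ≤ (n + a).choose (n - s) * (n + b).choose s * ((1 - x) / 2) ^ s :=
          mul_le_of_le_one_right (by positivity) (pow_le_one₀ hx' (by linarith))
      _ ≤ _ := choose_sub_mul_choose_mul_pow_le n a b s hsn ht
  calc |jacobi a b n x|
      ≤ ∑ s ∈ range (n + 1), |genChoose (n + a) (n - s) * genChoose (n + b) s *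
          ((x - 1) / 2) ^ s * ((x + 1) / 2) ^ (n - s)| := abs_sum_le_sum_abs _ _
    _ ≤ ∑ s ∈ range (n + 1), (n + a).choose n * (y ^ s / s !) := sum_le_sum hterm
    _ = (n + a).choose n * ∑ s ∈ range (n + 1), y ^ s / s ! := (mul_sum _ _ _).symm
    _ ≤ (n + a).choose n * exp y := by
        gcongr
        exact sum_le_exp_of_nonneg (by positivity) _

lemma exp_one_div_sixtyfour_le : exp (1 / 64) ≤ 64 / 63 :=
  (exp_bound_div_one_sub_of_interval (by norm_num) (by norm_num)).trans_eq (by norm_num)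

lemma exp_sixtyfive_div_sixtyfour_le : exp (65 / 64) ≤ 20 / 7 := by
  calc exp (65 / 64) = exp 1 * exp (1 / 64) := by rw [← exp_add]; norm_num
    _ ≤ 2.7182818286 * (64 / 63) := by
        gcongr
        exacts [exp_one_lt_d9.le, exp_one_div_sixtyfour_le]
    _ ≤ 20 / 7 := by norm_num

lemma mul_log_div_le {N A : ℝ} (hN : 0 < N) (h : 4 * N ≤ 3 * A) :
    N * log ((N + A) / N) ≤ A * (log 2 - 1 / 64) := by
  have hA : 0 ≤ A := by linarith
  have tangent : log ((N + A) / N) ≤ log 2 + (N + A) / N / 2 - 1 := by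
    have := log_le_sub_one_of_pos (x := (N + A) / N / 2) (by positivity)
    rw [log_div (by positivity) two_ne_zero] at this
    linarith
  have hmul : N * ((N + A) / N / 2) = (N + A) / 2 := by field_simp
  nlinarith [mul_le_mul_of_nonneg_left tangent hN.le, log_two_gt_d9]

lemma div_pow_mul_exp_le {n a : ℕ} (hn : 0 < n) (h : 4 * n ≤ 3 * a) :
    ((n + a : ℝ) / n) ^ n * exp (a / 64) ≤ 2 ^ a := by
  have hlog := mul_log_div_le (N := n) (A := a) (by exact_mod_cast hn) (by exact_mod_cast h)
  calc ((n + a : ℝ) / n) ^ n * exp (a / 64) = exp (n * log ((n + a) / n) + a / 64) := by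
        rw [exp_add, ← log_pow, exp_log (by positivity)]
    _ ≤ exp (a * log 2) := exp_le_exp.mpr (by linarith)
    _ = 2 ^ a := by rw [← log_pow, exp_log (by positivity)]

lemma choose_mul_pow_mul_exp_le (n a : ℕ) :
    ((n + a).choose a : ℝ) * a ^ a * exp (a / 64) ≤ (4 * n + 2 * a) ^ a := by
  rcases le_or_gt (3 * a) (4 * n) with h | h
  · have hfac : (a : ℝ) ^ a / a ! ≤ exp a := pow_div_factorial_le_exp _ (by positivity) a
    have hchoose : ((n + a).choose a : ℝ) ≤ (n + a) ^ a / a ! := by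
      exact_mod_cast Nat.choose_le_pow_div (α := ℝ) a (n + a)
    have hbase : (n + a) * exp (65 / 64) ≤ 4 * n + 2 * (a : ℝ) := by
      have : 6 * (a : ℝ) ≤ 8 * n := by exact_mod_cast (by omega : 6 * a ≤ 8 * n)
      nlinarith [exp_sixtyfive_div_sixtyfour_le]
    calc ((n + a).choose a : ℝ) * a ^ a * exp (a / 64)
        ≤ (n + a) ^ a / a ! * a ^ a * exp (a / 64) := by gcongr
      _ = (n + a) ^ a * (a ^ a / a !) * exp (a / 64) := by ring
      _ ≤ (n + a) ^ a * exp a * exp (a / 64) := by gcongr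
      _ = ((n + a) * exp (65 / 64)) ^ a := by
          rw [mul_pow, ← exp_nat_mul, mul_assoc, ← exp_add]; ring_nf
      _ ≤ (4 * n + 2 * a) ^ a := by gcongr
  · rcases Nat.eq_zero_or_pos n with rfl | hn
    · have hexp : exp (a / 64) ≤ 2 ^ a := by
        calc exp (a / 64) = exp (1 / 64) ^ a := by rw [← exp_nat_mul]; ring_nf
          _ ≤ 2 ^ a := by gcongr; linarith [exp_one_div_sixtyfour_le]
      simp only [zero_add, Nat.choose_self, Nat.cast_one, one_mul, CharP.cast_eq_zero, mul_zero]
      rw [mul_pow, mul_comm ((2 : ℝ) ^ a)]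
      gcongr
    have hent : ((n + a).choose a : ℝ) * a ^ a ≤ (n + a) ^ (n + a) / n ^ n := by
      rw [le_div_iff₀ (by positivity)]
      have := Nat.choose_mul_pow_mul_pow_le_add_pow n a
      calc ((n + a).choose a : ℝ) * a ^ a * n ^ n = ((n + a).choose a * n ^ n * a ^ a : ℕ) := by
            push_cast; ring
        _ ≤ ((n + a) ^ (n + a) : ℕ) := by exact_mod_cast this
        _ = _ := by push_cast; ring
    calc ((n + a).choose a : ℝ) * a ^ a * exp (a / 64)
        ≤ (n + a) ^ (n + a) / n ^ n * exp (a / 64) := by gcongr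
      _ = (n + a) ^ a * ((n + a : ℝ) / n) ^ n * exp (a / 64) := by
          rw [div_pow, pow_add]; ring
      _ ≤ (n + a) ^ a * 2 ^ a := by
          rw [mul_assoc]; gcongr; exact div_pow_mul_exp_le hn (by omega)
      _ = (2 * n + 2 * a) ^ a := by rw [← mul_pow]; ring
      _ ≤ (4 * n + 2 * a) ^ a := by gcongr; linarith

lemma abs_rpow_mul_jacobi_le (a b n : ℕ) {x : ℝ} (hx : x ∈ Set.Icc (-1 : ℝ) 1)
    (hxa : (1 - x) / 2 ≤ (a / (4 * (2 * n + a + b + 1))) ^ 2) :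
    |((1 - x) / 2) ^ ((a : ℝ) / 2) * jacobi a b n x| ≤ 2 ^ (-(a : ℝ)) := by
  set v : ℝ := 2 * n + a + b + 1
  have hv : 0 < v := by positivity
  have ht : 0 ≤ (1 - x) / 2 := by linarith [hx.2]
  have hweight : ((1 - x) / 2) ^ ((a : ℝ) / 2) ≤ (a / (4 * v)) ^ a := by
    calc ((1 - x) / 2) ^ ((a : ℝ) / 2) ≤ ((a / (4 * v)) ^ 2) ^ ((a : ℝ) / 2) := by gcongr
      _ = (a / (4 * v)) ^ a := by
          rw [← rpow_natCast_mul (by positivity), ← rpow_natCast]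
          congr 1
          push_cast
          ring
  have hexponent : (1 - x) / 2 * (n * (n + b) / (a + 1)) ≤ a / 64 := by
    have hnb : (n : ℝ) * (n + b) ≤ v ^ 2 / 4 := by
      simp only [v]
      nlinarith [sq_nonneg ((b : ℝ) + a + 1), mul_nonneg (by positivity : (0 : ℝ) ≤ 2 * n + b)
        (by positivity : (0 : ℝ) ≤ a + 1)]
    calc (1 - x) / 2 * (n * (n + b) / (a + 1)) ≤ (a / (4 * v)) ^ 2 * (v ^ 2 / 4 / (a + 1)) := by
          gcongr
      _ = a / 64 * (a / (a + 1)) := by field_simp; ring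
      _ ≤ a / 64 := mul_le_of_le_one_right (by positivity)
          ((div_le_one (by positivity)).mpr (by linarith))
  have hcore : ((n + a).choose n : ℝ) * a ^ a * exp (a / 64) ≤ (2 * v) ^ a := by
    have : 4 * n + 2 * a ≤ 2 * v := by
      simp only [v]
      linarith [(Nat.cast_nonneg b : (0 : ℝ) ≤ b)]
    rw [Nat.choose_symm_add]
    exact (choose_mul_pow_mul_exp_le n a).trans (by gcongr)
  calc |((1 - x) / 2) ^ ((a : ℝ) / 2) * jacobi a b n x|
      = ((1 - x) / 2) ^ ((a : ℝ) / 2) * |jacobi a b n x| := by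
        rw [abs_mul, abs_of_nonneg (by positivity)]
    _ ≤ (a / (4 * v)) ^ a * ((n + a).choose n * exp (a / 64)) := by
        gcongr
        exact (abs_jacobi_natCast_le a b n hx).trans (by gcongr)
    _ = ((n + a).choose n * a ^ a * exp (a / 64)) / (4 * v) ^ a := by rw [div_pow]; ring
    _ ≤ (2 * v) ^ a / (4 * v) ^ a := by gcongr
    _ = 2 ^ (-(a : ℝ)) := by
        rw [← div_pow, rpow_neg zero_le_two, rpow_natCast, ← inv_pow]
        congr 1
        field_simp
        norm_num

theorem stmt10_general (β : ℕ) (ε : ℝ) (hε : ε ∈ Set.Ioo (0 : ℝ) 2) (c : ℝ) :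
    ∃ C : ℝ, 0 < C ∧
      ∀ α n : ℕ, 1 ≤ α → (α : ℝ) ≤ c * (1 + (n : ℝ)) →
        ∀ x ∈ Set.Icc (-1 + ε) (1 : ℝ),
          1 - x ≤ (1 / 16) *
              (1 - (1 - (α : ℝ) ^ 2 / (2 * ((n : ℝ) + ((α : ℝ) + (β : ℝ) + 1) / 2) ^ 2))) →
            |((1 - x) / 2) ^ ((α : ℝ) / 2) * jacobi (α : ℝ) (β : ℝ) n x|
              ≤ C * (2 : ℝ) ^ (-(α : ℝ)) := by
  refine ⟨1, one_pos, fun α n _ _ x hx hxtr => ?_⟩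
  have hxa : (1 - x) / 2 ≤ (α / (4 * (2 * n + α + β + 1))) ^ 2 := by
    have : (1 / 16) * (1 - (1 - (α : ℝ) ^ 2 / (2 * ((n : ℝ) + ((α : ℝ) + (β : ℝ) + 1) / 2) ^ 2)))
        = 2 * (α / (4 * (2 * n + α + β + 1))) ^ 2 := by
      field_simp; ring
    linarith
  rw [one_mul]
  exact abs_rpow_mul_jacobi_le α β n ⟨by linarith [hε.1, hx.1], hx.2⟩ hxa

theorem stmt10 (β : ℕ) (ε : ℝ) (hε : ε ∈ Set.Ioo (0 : ℝ) 2) (c : ℝ) (hc : 0 < c) :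
    ∃ C : ℝ, 0 < C ∧
      ∀ α n : ℕ, 1 ≤ α → (α : ℝ) ≤ c * (1 + (n : ℝ)) →
        ∀ x ∈ Set.Icc (-1 + ε) (1 : ℝ),
          1 - x ≤ (1 / 16) *
              (1 - (1 - (α : ℝ) ^ 2 / (2 * ((n : ℝ) + ((α : ℝ) + (β : ℝ) + 1) / 2) ^ 2))) →
            |((1 - x) / 2) ^ ((α : ℝ) / 2) * jacobi (α : ℝ) (β : ℝ) n x|
              ≤ C * (2 : ℝ) ^ (-(α : ℝ)) :=
  stmt10_general β ε hε c
end
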